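/- Under the bistable Solow–Swan hypotheses, trajectories starting to the right of the unstable equilibrium E₁ reach the safe equilibrium E: if x is a solution with initial condition x₀ > E₁, then x(t) → E as t → ∞. -/

import Mathlib

/-!
Write `G z = F z - C z`, so the equation is the autonomous `x' = G x`. Since `G > 0` on `(E₁, E)`
and `G < 0` on `(E, ∞)`, every level `c` at which `G` points towards `E` is a barrier that a
trajectory cannot cross; so a trajectory from `x₀ > E₁` stays between `x₀` and `E` and moves
monotonically towards `E`.
It cannot stop at some `L` short of `E`: `G` is continuous, hence bounded away from `0` on the
compact interval between `x₀` and `L`, which would force linear growth of `|x - x₀|`.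
The case `x₀ > E` is reduced to `x₀ ≤ E` by the reflection `x ↦ -x`.
-/

open Filter Set Topology

def IsForwardSolution (G x : ℝ → ℝ) : Prop :=
  ∀ t, 0 ≤ t → HasDerivAt x (G (x t)) t

namespace IsForwardSolution

variable {G x : ℝ → ℝ}

theorem neg (hx : IsForwardSolution G x) :
    IsForwardSolution (fun z => -G (-z)) (fun t => -x t) := fun t ht => by
  simpa only [neg_neg] using (hx t ht).fun_neg

theorem continuousOn (hx : IsForwardSolution G x) : ContinuousOn x (Ici 0) :=
  fun t ht => (hx t ht).continuousAt.continuousWithinAt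

theorem le_of_neg_at (hx : IsForwardSolution G x) {c : ℝ} (h0 : x 0 ≤ c) (hc : G c < 0)
    {t : ℝ} (ht : 0 ≤ t) : x t ≤ c :=
  image_le_of_deriv_right_lt_deriv_boundary' (f := x) (B := fun _ => c) (B' := fun _ => 0)
    (hx.continuousOn.mono Icc_subset_Ici_self)
    (fun s hs => (hx s hs.1).hasDerivWithinAt) h0 continuousOn_const
    (fun _ _ => hasDerivWithinAt_const _ _ _) (fun _ _ hs => hs ▸ hc) ⟨ht, le_rfl⟩

theorem le_of_neg_on_Ioo (hx : IsForwardSolution G x) {a b : ℝ} (h0 : x 0 ≤ a) (hab : a < b)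
    (hneg : ∀ z ∈ Ioo a b, G z < 0) {t : ℝ} (ht : 0 ≤ t) : x t ≤ a := by
  refine le_of_forall_gt_imp_ge_of_dense fun c hc => ?_
  obtain ⟨c', hc', hc'c⟩ := exists_between (lt_min hc hab)
  exact (hx.le_of_neg_at (h0.trans hc'.le) (hneg c' ⟨hc', hc'c.trans_le (min_le_right _ _)⟩)
    ht).trans (hc'c.le.trans (min_le_left _ _))

theorem ge_of_pos_on_Ioo (hx : IsForwardSolution G x) {a b : ℝ} (h0 : a ≤ x 0) (hba : b < a)
    (hpos : ∀ z ∈ Ioo b a, 0 < G z) {t : ℝ} (ht : 0 ≤ t) : a ≤ x t :=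
  neg_le_neg_iff.1 <| hx.neg.le_of_neg_on_Ioo (neg_le_neg h0) (neg_lt_neg hba)
    (fun z hz => neg_neg_of_pos (hpos (-z) ⟨lt_neg_of_lt_neg hz.2, neg_lt_of_neg_lt hz.1⟩)) ht

theorem monotoneOn (hx : IsForwardSolution G x) (hG : ∀ t, 0 ≤ t → 0 ≤ G (x t)) :
    MonotoneOn x (Ici 0) := by
  refine monotoneOn_of_hasDerivWithinAt_nonneg (f' := fun t => G (x t)) (convex_Ici 0)
    hx.continuousOn (fun t ht => ?_) (fun t ht => ?_) <;> rw [interior_Ici] at ht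
  · exact (hx t ht.le).hasDerivWithinAt
  · exact hG t ht.le

theorem add_mul_le (hx : IsForwardSolution G x) {δ : ℝ} (hG : ∀ t, 0 ≤ t → δ ≤ G (x t))
    {t : ℝ} (ht : 0 ≤ t) : x 0 + δ * t ≤ x t := by
  have := (convex_Ici (0 : ℝ)).mul_sub_le_image_sub_of_le_deriv hx.continuousOn
    (fun s hs => (hx s (interior_subset hs)).differentiableAt.differentiableWithinAt)
    (fun s hs => (hx s (interior_subset hs)).deriv ▸ hG s (interior_subset hs))
    0 self_mem_Ici t ht ht
  linarith

theorem exists_lt_of_pos_on_Icc (hx : IsForwardSolution G x) {a c : ℝ}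
    (hG : ContinuousOn G (Icc a c)) (hpos : ∀ z ∈ Icc a c, 0 < G z)
    (hlow : ∀ t, 0 ≤ t → a ≤ x t) : ∃ t, 0 ≤ t ∧ c < x t := by
  by_contra! hup
  have hmem : ∀ t, 0 ≤ t → x t ∈ Icc a c := fun t ht => ⟨hlow t ht, hup t ht⟩
  obtain ⟨z₀, hz₀, hmin⟩ := isCompact_Icc.exists_isMinOn ⟨x 0, hmem 0 le_rfl⟩ hG
  set δ := G z₀
  have hδ : 0 < δ := hpos z₀ hz₀
  set T := (c - a) / δ + 1
  have hac : a ≤ c := (hlow 0 le_rfl).trans (hup 0 le_rfl)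
  have hT : 0 ≤ T := add_nonneg (div_nonneg (sub_nonneg.2 hac) hδ.le) zero_le_one
  have hgrowth := hx.add_mul_le (fun t ht => hmin (hmem t ht)) hT
  have hδT : δ * T = c - a + δ := by rw [mul_add, mul_one, mul_div_cancel₀ _ hδ.ne']
  linarith [hup T hT, hlow 0 le_rfl]

theorem tendsto_stable_equilibrium_of_le (hx : IsForwardSolution G x) (hG : Continuous G)
    {p E q : ℝ} (hp : p < x 0) (hxE : x 0 ≤ E) (hq : E < q) (hGE : G E = 0)
    (hpos : ∀ z ∈ Ioo p E, 0 < G z) (hneg : ∀ z ∈ Ioo E q, G z < 0) :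
    Tendsto x atTop (𝓝 E) := by
  have hup : ∀ t, 0 ≤ t → x t ≤ E := fun t => hx.le_of_neg_on_Ioo hxE hq hneg
  have hlow : ∀ t, 0 ≤ t → x 0 ≤ x t := fun t =>
    hx.ge_of_pos_on_Ioo le_rfl hp fun z hz => hpos z ⟨hz.1, hz.2.trans_le hxE⟩
  have hmono : MonotoneOn x (Ici 0) := hx.monotoneOn fun t ht => by
    rcases (hup t ht).eq_or_lt with hE | hE
    · rw [hE, hGE]
    · exact (hpos _ ⟨hp.trans_le (hlow t ht), hE⟩).le
  refine tendsto_order.2 ⟨fun c hc => ?_, fun d hd => ?_⟩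
  · obtain ⟨T, hT, hcT⟩ := hx.exists_lt_of_pos_on_Icc hG.continuousOn
      (fun z hz => hpos z ⟨hp.trans_le hz.1, hz.2.trans_lt hc⟩) hlow
    filter_upwards [eventually_ge_atTop T] with t ht
    exact hcT.trans_le (hmono hT (hT.trans ht) ht)
  · filter_upwards [eventually_ge_atTop 0] with t ht
    exact (hup t ht).trans_lt hd

end IsForwardSolution

theorem solow_swan_bistable_right_to_E_general
    (F : ℝ → ℝ) (C E₁ E : ℝ)
    (hF : LocallyLipschitz F)
    (hE₁E : E₁ < E)
    (hEeq : F E = C * E)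
    (hgt : ∀ z ∈ Set.Ioo E₁ E, C * z < F z)
    (hlt : ∀ z : ℝ, E < z → F z < C * z)
    (x : ℝ → ℝ) (x₀ : ℝ) (hx₀ : E₁ < x₀) (hinit : x 0 = x₀)
    (hode : ∀ t : ℝ, 0 ≤ t → HasDerivAt x (F (x t) - C * x t) t) :
    Filter.Tendsto x Filter.atTop (nhds E) := by
  set G : ℝ → ℝ := fun z => F z - C * z
  have hx : IsForwardSolution G x := hode
  have hG : Continuous G := hF.continuous.sub (continuous_const.mul continuous_id)
  have hGE : G E = 0 := sub_eq_zero.2 hEeq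
  have hpos : ∀ z ∈ Ioo E₁ E, 0 < G z := fun z hz => sub_pos.2 (hgt z hz)
  have hneg : ∀ z, E < z → G z < 0 := fun z hz => sub_neg.2 (hlt z hz)
  rcases le_or_gt x₀ E with hx₀E | hEx₀
  · exact hx.tendsto_stable_equilibrium_of_le hG (hinit ▸ hx₀) (hinit ▸ hx₀E) (lt_add_one E)
      hGE hpos fun z hz => hneg z hz.1
  · have hreflected := hx.neg.tendsto_stable_equilibrium_of_le (by fun_prop)
      (p := -(x₀ + 1)) (q := -E₁) (by rw [hinit]; linarith) (by rw [hinit]; linarith)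
      (neg_lt_neg hE₁E) (by simp [hGE])
      (fun z hz => neg_pos.2 (hneg (-z) (lt_neg_of_lt_neg hz.2)))
      (fun z hz => neg_neg_of_pos (hpos (-z) ⟨lt_neg_of_lt_neg hz.2, neg_lt_of_neg_lt hz.1⟩))
    simpa using hreflected.neg

/-- Under the bistable Solow–Swan hypotheses, trajectories starting to the right
of the unstable equilibrium `E₁` reach the safe equilibrium `E`. -/
theorem solow_swan_bistable_right_to_E
    (F : ℝ → ℝ) (C E₁ E : ℝ) (hC : 0 < C)
    (hF : LocallyLipschitz F) (hF0 : F 0 = 0)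
    (hE₁ : 0 < E₁) (hE₁E : E₁ < E)
    (hE₁eq : F E₁ = C * E₁) (hEeq : F E = C * E)
    (hlt₁ : ∀ z ∈ Set.Ioo (0 : ℝ) E₁, F z < C * z)
    (hgt : ∀ z ∈ Set.Ioo E₁ E, C * z < F z)
    (hlt : ∀ z : ℝ, E < z → F z < C * z)
    (x : ℝ → ℝ) (x₀ : ℝ) (hx₀ : E₁ < x₀) (hinit : x 0 = x₀)
    (hode : ∀ t : ℝ, 0 ≤ t → HasDerivAt x (F (x t) - C * x t) t) :
    Filter.Tendsto x Filter.atTop (nhds E) :=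
  solow_swan_bistable_right_to_E_general F C E₁ E hF hE₁E hEeq hgt hlt x x₀ hx₀ hinit hode
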